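/- arXiv:2208.03420 — 2 statements merged into one kernel-verified Lean document; each statement's English description precedes it below -/
import Mathlib

section
/- For differential forms on a star-shaped domain, the Poincaré (Koszul-type) homotopy operators satisfy the identity d∘p + p∘d = I on k-forms for 0 < k < n, where d is the exterior derivative and p is the Poincaré operator defined by integration along rays from the star center. -/
/-!
Write `γₜ x = x₀ + t • (x - x₀)`. The integrand of `pω` is `C¹` jointly in `(x, t)` near
`{x} × [0, 1]`, so `d(pω)` may be computed by differentiating under the integral sign. The terms in
which the slot `x - x₀` is differentiated give `∑ᵢ (-1)ⁱ tᵏ⁻¹ ω(γₜ x)(vᵢ, v̂ᵢ) = k tᵏ⁻¹ ω(γₜ x)(v)`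
by antisymmetry; the remaining ones cancel against the terms of `p(dω)` in which `x - x₀` is not
differentiated. What is left is `∫₀¹ (k tᵏ⁻¹ ω(γₜ x)(v) + tᵏ Dω(γₜ x)(x - x₀)(v)) dt`, the integral
of `d/dt (tᵏ ω(γₜ x)(v))`, which is `ω(x)(v)`.
-/

open scoped BigOperators
open MeasureTheory

noncomputable section

/-- Differential `k`-forms on `ℝⁿ`: alternating-map valued functions. -/
abbrev DForm (n k : ℕ) := (Fin n → ℝ) → ((Fin n → ℝ) [⋀^Fin k]→ₗ[ℝ] ℝ)

/-- The underlying value function of a form. -/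
def fval {n k : ℕ} (ω : DForm n k) : (Fin n → ℝ) → (Fin k → (Fin n → ℝ)) → ℝ :=
  fun x v => ω x v

/-- Exterior derivative, given by the standard value formula. -/
def dOp {n k : ℕ} (ω : (Fin n → ℝ) → (Fin k → (Fin n → ℝ)) → ℝ) :
    (Fin n → ℝ) → (Fin (k + 1) → (Fin n → ℝ)) → ℝ :=
  fun x v => ∑ i : Fin (k + 1), (-1 : ℝ) ^ (i : ℕ) *
    fderiv ℝ (fun y => ω y (v ∘ i.succAbove)) x (v i)

/-- Poincaré (homotopy) operator with center `x₀`, acting on (`k+1`)-forms: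
`(pω)(x)(v₁,…,v_k) = ∫₀¹ t^k ω(x₀ + t(x−x₀))(x−x₀, v₁,…,v_k) dt`. -/
def pOp {n k : ℕ} (x₀ : Fin n → ℝ)
    (ω : (Fin n → ℝ) → (Fin (k + 1) → (Fin n → ℝ)) → ℝ) :
    (Fin n → ℝ) → (Fin k → (Fin n → ℝ)) → ℝ :=
  fun x v => ∫ t in (0 : ℝ)..1,
    t ^ k * ω (x₀ + t • (x - x₀)) (Fin.cons (x - x₀) v)

open Set Metric

section ParametricIntegral

variable {E F : Type*} [NormedAddCommGroup E] [NormedSpace ℝ E] [NormedAddCommGroup F]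
  [NormedSpace ℝ F] {f : E → ℝ → F} {U : Set (E × ℝ)} {x : E} {s : Set ℝ} {a b : ℝ}

theorem hasFDerivAt_partial_of_contDiffOn (hU : IsOpen U)
    (hf : ContDiffOn ℝ 1 (fun p : E × ℝ => f p.1 p.2) U) {y : E} {t : ℝ} (hyt : (y, t) ∈ U) :
    HasFDerivAt (fun y => f y t)
      ((fderiv ℝ (fun p : E × ℝ => f p.1 p.2) (y, t)).comp (ContinuousLinearMap.inl ℝ E ℝ)) y :=
  (((hf.differentiableOn one_ne_zero _ hyt).differentiableAt (hU.mem_nhds hyt)).hasFDerivAt.comp y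
    (hasFDerivAt_prodMk_left (𝕜 := ℝ) y t) :)

theorem continuousOn_partial_of_contDiffOn (hf : ContDiffOn ℝ 1 (fun p : E × ℝ => f p.1 p.2) U)
    (hx : ∀ t ∈ s, (x, t) ∈ U) : ContinuousOn (f x) s :=
  hf.continuousOn.comp (by fun_prop) hx

theorem continuousOn_fderiv_partial_of_contDiffOn (hU : IsOpen U)
    (hf : ContDiffOn ℝ 1 (fun p : E × ℝ => f p.1 p.2) U) (hx : ∀ t ∈ s, (x, t) ∈ U) :
    ContinuousOn (fun t => fderiv ℝ (fun y => f y t) x) s :=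
  (((hf.continuousOn_fderiv_of_isOpen hU le_rfl).comp (by fun_prop) hx).clm_comp
    continuousOn_const).congr fun t ht => (hasFDerivAt_partial_of_contDiffOn hU hf (hx t ht)).fderiv

theorem hasFDerivAt_intervalIntegral_of_contDiffOn [CompleteSpace F] (hU : IsOpen U)
    (hf : ContDiffOn ℝ 1 (fun p : E × ℝ => f p.1 p.2) U) (hx : ∀ t ∈ uIcc a b, (x, t) ∈ U) :
    HasFDerivAt (fun y => ∫ t in a..b, f y t) (∫ t in a..b, fderiv ℝ (fun y => f y t) x) x := by
  set D := fderiv ℝ (fun p : E × ℝ => f p.1 p.2)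
  have hD : ContinuousOn D U := hf.continuousOn_fderiv_of_isOpen hU le_rfl
  set K := (fun t => (x, t)) '' uIcc a b
  have hK : IsCompact K := isCompact_uIcc.image (by fun_prop)
  have hKU : K ⊆ U := by rintro _ ⟨t, ht, rfl⟩; exact hx t ht
  obtain ⟨M, hM⟩ := hK.exists_bound_of_continuousOn (hD.mono hKU)
  -- a whole `δ`-neighbourhood of `{x} × [a, b]` stays in `U` with `‖D‖ < M + 1`: this is the
  -- domination bound for differentiating under the integral sign
  obtain ⟨δ, hδ, hδU⟩ := hK.exists_thickening_subset_open
    (hD.norm.isOpen_inter_preimage hU isOpen_Iio)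
    (fun p hp => ⟨hKU hp, (hM p hp).trans_lt (lt_add_one M)⟩)
  have hball : ∀ y ∈ ball x δ, ∀ t ∈ uIcc a b, (y, t) ∈ U ∧ ‖D (y, t)‖ < M + 1 :=
    fun y hy t ht => hδU (mem_thickening_iff.2
      ⟨(x, t), ⟨t, ht, rfl⟩, by simpa [Prod.dist_eq, dist_comm] using hy⟩)
  refine intervalIntegral.hasFDerivAt_integral_of_dominated_of_fderiv_le
    (bound := fun _ => M + 1) (ball_mem_nhds x hδ)
    (Filter.eventually_of_mem (ball_mem_nhds x hδ) fun y hy =>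
      ((continuousOn_partial_of_contDiffOn hf fun t ht => (hball y hy t ht).1).mono
        uIoc_subset_uIcc).aestronglyMeasurable measurableSet_uIoc)
    (continuousOn_partial_of_contDiffOn hf hx).intervalIntegrable
    (((continuousOn_fderiv_partial_of_contDiffOn hU hf hx).mono
      uIoc_subset_uIcc).aestronglyMeasurable measurableSet_uIoc)
    (ae_of_all _ fun t ht y hy => ?_) intervalIntegrable_const
    (ae_of_all _ fun t ht y hy => (hasFDerivAt_partial_of_contDiffOn hU hf
      (hball y hy t (uIoc_subset_uIcc ht)).1).differentiableAt.hasFDerivAt)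
  obtain ⟨hyt, hDyt⟩ := hball y hy t (uIoc_subset_uIcc ht)
  rw [(hasFDerivAt_partial_of_contDiffOn hU hf hyt).fderiv]
  calc _ ≤ ‖D (y, t)‖ * ‖ContinuousLinearMap.inl ℝ E ℝ‖ := ContinuousLinearMap.opNorm_comp_le _ _
    _ ≤ ‖D (y, t)‖ * 1 := by gcongr; exact ContinuousLinearMap.norm_inl_le_one ℝ E ℝ
    _ ≤ M + 1 := by linarith

theorem fderiv_intervalIntegral_apply_of_contDiffOn [CompleteSpace F] (hU : IsOpen U)
    (hf : ContDiffOn ℝ 1 (fun p : E × ℝ => f p.1 p.2) U) (hx : ∀ t ∈ uIcc a b, (x, t) ∈ U)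
    (h : E) :
    fderiv ℝ (fun y => ∫ t in a..b, f y t) x h = ∫ t in a..b, fderiv ℝ (fun y => f y t) x h := by
  rw [(hasFDerivAt_intervalIntegral_of_contDiffOn hU hf hx).fderiv,
    ContinuousLinearMap.intervalIntegral_apply
      (continuousOn_fderiv_partial_of_contDiffOn hU hf hx).intervalIntegrable]

end ParametricIntegral

namespace AlternatingMap

theorem sum_neg_one_pow_smul_map_cons_removeNth {R M N : Type*} [CommRing R] [AddCommGroup M]
    [Module R M] [AddCommGroup N] [Module R N] {m : ℕ} (φ : M [⋀^Fin (m + 1)]→ₗ[R] N)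
    (v : Fin (m + 1) → M) :
    ∑ i : Fin (m + 1), (-1 : R) ^ (i : ℕ) • φ (Fin.cons (v i) (i.removeNth v)) = (m + 1) • φ v := by
  have hterm : ∀ i : Fin (m + 1), (-1 : R) ^ (i : ℕ) • φ (Fin.cons (v i) (i.removeNth v)) = φ v :=
    fun i => by
      have h := φ.neg_one_pow_smul_map_insertNth i (v i) (i.removeNth v)
      rw [Fin.insertNth_self_removeNth] at h
      rw [show Fin.cons (v i) (i.removeNth v) = Matrix.vecCons (v i) (i.removeNth v) from rfl, ← h,
        ← Int.cast_smul_eq_zsmul R, smul_smul, Int.cast_pow, Int.cast_neg, Int.cast_one, ← pow_add,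
        Even.neg_one_pow ⟨i, rfl⟩, one_smul]
  simp [hterm]

variable {E : Type*} [NormedAddCommGroup E] [NormedSpace ℝ E] [FiniteDimensional ℝ E] {m : ℕ}

def consCLM (φ : E [⋀^Fin (m + 1)]→ₗ[ℝ] ℝ) (w : Fin m → E) : E →L[ℝ] ℝ :=
  LinearMap.toContinuousLinearMap
    { toFun := fun a => φ (Fin.cons a w)
      map_add' := fun a b => φ.map_vecCons_add w a b
      map_smul' := fun c a => φ.map_vecCons_smul w c a }

@[simp]
theorem consCLM_apply (φ : E [⋀^Fin (m + 1)]→ₗ[ℝ] ℝ) (w : Fin m → E) (a : E) :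
    φ.consCLM w a = φ (Fin.cons a w) :=
  rfl

end AlternatingMap

section Ray

variable {E : Type*} [NormedAddCommGroup E] [NormedSpace ℝ E] {Ω : Set E} {x₀ x : E}

theorem ContinuousOn.comp_ray {X : Type*} [TopologicalSpace X] {g : E → X} (hg : ContinuousOn g Ω)
    (hray : ∀ t ∈ Icc (0 : ℝ) 1, x₀ + t • (x - x₀) ∈ Ω) :
    ContinuousOn (fun t : ℝ => g (x₀ + t • (x - x₀))) (Icc 0 1) :=
  hg.comp (by fun_prop) hray

theorem ContDiffOn.continuousOn_fderiv_comp_ray {g : E → ℝ} (hg : ContDiffOn ℝ 1 g Ω)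
    (hΩ : IsOpen Ω) (hray : ∀ t ∈ Icc (0 : ℝ) 1, x₀ + t • (x - x₀) ∈ Ω) (h : E) :
    ContinuousOn (fun t : ℝ => fderiv ℝ g (x₀ + t • (x - x₀)) h) (Icc 0 1) :=
  ((hg.continuousOn_fderiv_of_isOpen hΩ le_rfl).comp_ray hray).clm_apply continuousOn_const

theorem integral_deriv_pow_succ_mul_comp_ray {g : E → ℝ} (hg : ContDiffOn ℝ 1 g Ω)
    (hΩ : IsOpen Ω) (hray : ∀ t ∈ Icc (0 : ℝ) 1, x₀ + t • (x - x₀) ∈ Ω) (k : ℕ) :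
    ∫ t in (0 : ℝ)..1, ((k + 1) * t ^ k * g (x₀ + t • (x - x₀))
      + t ^ (k + 1) * fderiv ℝ g (x₀ + t • (x - x₀)) (x - x₀)) = g x := by
  have hderiv : ∀ t ∈ uIcc (0 : ℝ) 1, HasDerivAt (fun s => s ^ (k + 1) * g (x₀ + s • (x - x₀)))
      ((k + 1) * t ^ k * g (x₀ + t • (x - x₀))
        + t ^ (k + 1) * fderiv ℝ g (x₀ + t • (x - x₀)) (x - x₀)) t := by
    intro t ht
    have hyt := hray t (by simpa using ht)
    have hg' := ((hg.differentiableOn one_ne_zero _ hyt).differentiableAt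
      (hΩ.mem_nhds hyt)).hasFDerivAt
    have hline : HasDerivAt (fun s : ℝ => x₀ + s • (x - x₀)) (x - x₀) t := by
      simpa using ((hasDerivAt_id t).smul_const (x - x₀)).const_add x₀
    refine ((hasDerivAt_pow (k + 1) t).mul (hg'.comp_hasDerivAt t hline)).congr_deriv ?_
    simp
  rw [intervalIntegral.integral_eq_sub_of_hasDerivAt hderiv]
  · simp
  · refine ContinuousOn.intervalIntegrable_of_Icc zero_le_one ?_
    exact ((continuousOn_const.mul (continuousOn_pow k)).mul (hg.continuousOn.comp_ray hray)).add
      ((continuousOn_pow (k + 1)).mul (hg.continuousOn_fderiv_comp_ray hΩ hray _))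

end Ray

section PoincareOperator

variable {n m : ℕ} {Ω : Set (Fin n → ℝ)} {x₀ x : Fin n → ℝ} {ω : DForm n (m + 1)}

theorem dOp_cons {k : ℕ} (f : (Fin n → ℝ) → (Fin (k + 1) → (Fin n → ℝ)) → ℝ)
    (y a : Fin n → ℝ) (v : Fin (k + 1) → (Fin n → ℝ)) :
    dOp f y (Fin.cons a v) = fderiv ℝ (fun y => f y v) y a
      - ∑ i : Fin (k + 1), (-1 : ℝ) ^ (i : ℕ) *
          fderiv ℝ (fun y => f y (Fin.cons a (i.removeNth v))) y (v i) := by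
  rw [dOp, Fin.sum_univ_succ]
  simp only [Fin.succAbove_zero, Fin.cons_comp_succ_succAbove,
    Fin.cons_zero, Fin.cons_succ, Fin.val_zero, Fin.val_succ, pow_zero, pow_succ, one_mul]
  simp [Finset.sum_neg_distrib, sub_eq_add_neg, Function.comp_def]

theorem contDiffOn_consCLM (hω : ∀ v, ContDiffOn ℝ 1 (fun y => fval ω y v) Ω)
    (w : Fin m → (Fin n → ℝ)) : ContDiffOn ℝ 1 (fun y => (ω y).consCLM w) Ω :=
  contDiffOn_clm_apply.2 fun a => hω (Fin.cons a w)

theorem contDiffOn_pOp_integrand (hω : ∀ v, ContDiffOn ℝ 1 (fun y => fval ω y v) Ω)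
    (w : Fin m → (Fin n → ℝ)) :
    ContDiffOn ℝ 1 (fun p : (Fin n → ℝ) × ℝ =>
        p.2 ^ m * fval ω (x₀ + p.2 • (p.1 - x₀)) (Fin.cons (p.1 - x₀) w))
      ((fun p : (Fin n → ℝ) × ℝ => x₀ + p.2 • (p.1 - x₀)) ⁻¹' Ω) :=
  (contDiff_snd.pow m).contDiffOn.mul
    (((contDiffOn_consCLM hω w).comp (f := fun p : (Fin n → ℝ) × ℝ => x₀ + p.2 • (p.1 - x₀))
      (by fun_prop) fun _ hp => hp).clm_apply (contDiff_fst.sub contDiff_const).contDiffOn)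

theorem fderiv_pOp_integrand_apply (hω : ∀ v, ContDiffOn ℝ 1 (fun y => fval ω y v) Ω)
    (hΩ : IsOpen Ω) (w : Fin m → (Fin n → ℝ)) {t : ℝ} (ht : x₀ + t • (x - x₀) ∈ Ω)
    (h : Fin n → ℝ) :
    fderiv ℝ (fun y => t ^ m * fval ω (x₀ + t • (y - x₀)) (Fin.cons (y - x₀) w)) x h
      = t ^ m * fval ω (x₀ + t • (x - x₀)) (Fin.cons h w)
        + t ^ (m + 1) * fderiv ℝ (fun y => fval ω y (Fin.cons (x - x₀) w))
            (x₀ + t • (x - x₀)) h := by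
  set Ψ := fun y => (ω y).consCLM w
  have hΨ : HasFDerivAt Ψ (fderiv ℝ Ψ (x₀ + t • (x - x₀))) (x₀ + t • (x - x₀)) :=
    (((contDiffOn_consCLM hω w).differentiableOn one_ne_zero _ ht).differentiableAt
      (hΩ.mem_nhds ht)).hasFDerivAt
  have hline : HasFDerivAt (fun y => x₀ + t • (y - x₀)) (t • ContinuousLinearMap.id ℝ _) x :=
    (((hasFDerivAt_id x).sub_const x₀).const_smul t).const_add x₀
  have hslot : fderiv ℝ (fun y => fval ω y (Fin.cons (x - x₀) w)) (x₀ + t • (x - x₀))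
      = (fderiv ℝ Ψ (x₀ + t • (x - x₀))).flip (x - x₀) := by
    change fderiv ℝ (fun y => Ψ y (x - x₀)) _ = _
    simpa only [ContinuousLinearMap.comp_zero, zero_add] using
      (hΨ.clm_apply (hasFDerivAt_const (x - x₀) _)).fderiv
  have hint : HasFDerivAt (fun y => t ^ m * fval ω (x₀ + t • (y - x₀)) (Fin.cons (y - x₀) w)) _ x :=
    ((hΨ.comp x hline).clm_apply ((hasFDerivAt_id x).sub_const x₀)).const_mul (t ^ m)
  rw [hint.fderiv, hslot]
  simp [fval, Ψ]
  ring

theorem fderiv_pOp_apply (hω : ∀ v, ContDiffOn ℝ 1 (fun y => fval ω y v) Ω) (hΩ : IsOpen Ω)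
    (hray : ∀ t ∈ Icc (0 : ℝ) 1, x₀ + t • (x - x₀) ∈ Ω) (w : Fin m → (Fin n → ℝ))
    (h : Fin n → ℝ) :
    fderiv ℝ (fun y => pOp x₀ (fval ω) y w) x h
      = ∫ t in (0 : ℝ)..1, (t ^ m * fval ω (x₀ + t • (x - x₀)) (Fin.cons h w)
        + t ^ (m + 1) * fderiv ℝ (fun y => fval ω y (Fin.cons (x - x₀) w))
            (x₀ + t • (x - x₀)) h) := by
  have hray' : ∀ t ∈ uIcc (0 : ℝ) 1,
      (x, t) ∈ (fun p : (Fin n → ℝ) × ℝ => x₀ + p.2 • (p.1 - x₀)) ⁻¹' Ω :=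
    fun t ht => hray t (by simpa using ht)
  exact (fderiv_intervalIntegral_apply_of_contDiffOn
    (f := fun y t => t ^ m * fval ω (x₀ + t • (y - x₀)) (Fin.cons (y - x₀) w))
    (hΩ.preimage (by fun_prop)) (contDiffOn_pOp_integrand hω w) hray' h).trans
    (intervalIntegral.integral_congr fun t ht => fderiv_pOp_integrand_apply hω hΩ w (hray' t ht) h)

theorem continuousOn_fderiv_pOp_integrand (hω : ∀ v, ContDiffOn ℝ 1 (fun y => fval ω y v) Ω)
    (hΩ : IsOpen Ω) (hray : ∀ t ∈ Icc (0 : ℝ) 1, x₀ + t • (x - x₀) ∈ Ω)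
    (w : Fin m → (Fin n → ℝ)) (h : Fin n → ℝ) :
    ContinuousOn (fun t : ℝ => t ^ m * fval ω (x₀ + t • (x - x₀)) (Fin.cons h w)
      + t ^ (m + 1) * fderiv ℝ (fun y => fval ω y (Fin.cons (x - x₀) w))
          (x₀ + t • (x - x₀)) h) (Icc 0 1) :=
  ((continuousOn_pow m).mul ((hω _).continuousOn.comp_ray hray)).add
    ((continuousOn_pow (m + 1)).mul ((hω _).continuousOn_fderiv_comp_ray hΩ hray h))

theorem continuousOn_dOp_comp_ray {k : ℕ} {f : (Fin n → ℝ) → (Fin k → (Fin n → ℝ)) → ℝ}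
    (hf : ∀ v, ContDiffOn ℝ 1 (fun y => f y v) Ω) (hΩ : IsOpen Ω)
    (hray : ∀ t ∈ Icc (0 : ℝ) 1, x₀ + t • (x - x₀) ∈ Ω) (v : Fin (k + 1) → (Fin n → ℝ)) :
    ContinuousOn (fun t : ℝ => dOp f (x₀ + t • (x - x₀)) v) (Icc 0 1) :=
  continuousOn_finsetSum _ fun _ _ =>
    continuousOn_const.mul ((hf _).continuousOn_fderiv_comp_ray hΩ hray _)

theorem dOp_pOp_add_pOp_dOp_eq_integral (hω : ∀ v, ContDiffOn ℝ 1 (fun y => fval ω y v) Ω)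
    (hΩ : IsOpen Ω) (hray : ∀ t ∈ Icc (0 : ℝ) 1, x₀ + t • (x - x₀) ∈ Ω)
    (v : Fin (m + 1) → (Fin n → ℝ)) :
    dOp (pOp x₀ (fval ω)) x v + pOp x₀ (dOp (fval ω)) x v
      = ∫ t in (0 : ℝ)..1, (∑ i : Fin (m + 1), (-1 : ℝ) ^ (i : ℕ) *
          (t ^ m * fval ω (x₀ + t • (x - x₀)) (Fin.cons (v i) (i.removeNth v))
            + t ^ (m + 1) * fderiv ℝ (fun y => fval ω y (Fin.cons (x - x₀) (i.removeNth v)))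
                (x₀ + t • (x - x₀)) (v i))
          + t ^ (m + 1) * dOp (fval ω) (x₀ + t • (x - x₀)) (Fin.cons (x - x₀) v)) := by
  have hterm := fun i : Fin (m + 1) =>
    continuousOn_fderiv_pOp_integrand hω hΩ hray (i.removeNth v) (v i)
  rw [intervalIntegral.integral_add
      (ContinuousOn.intervalIntegrable_of_Icc zero_le_one
        (continuousOn_finsetSum _ fun i _ => continuousOn_const.fun_mul (hterm i)))
      (ContinuousOn.intervalIntegrable_of_Icc zero_le_one
        ((continuousOn_pow (m + 1)).fun_mul (continuousOn_dOp_comp_ray hω hΩ hray _))),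
    intervalIntegral.integral_finsetSum fun i _ =>
      ((hterm i).intervalIntegrable_of_Icc zero_le_one).const_mul _]
  congr 1
  refine Finset.sum_congr rfl fun i _ => ?_
  rw [intervalIntegral.integral_const_mul, ← fderiv_pOp_apply hω hΩ hray]
  rfl

theorem dOp_pOp_integrand_add_pOp_dOp_integrand (ω : DForm n (m + 1)) (y a : Fin n → ℝ)
    (v : Fin (m + 1) → (Fin n → ℝ)) (t : ℝ) :
    ∑ i : Fin (m + 1), (-1 : ℝ) ^ (i : ℕ) *
        (t ^ m * fval ω y (Fin.cons (v i) (i.removeNth v))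
          + t ^ (m + 1) * fderiv ℝ (fun y => fval ω y (Fin.cons a (i.removeNth v))) y (v i))
      + t ^ (m + 1) * dOp (fval ω) y (Fin.cons a v)
      = (m + 1) * t ^ m * fval ω y v + t ^ (m + 1) * fderiv ℝ (fun y => fval ω y v) y a := by
  have hsign := (ω y).sum_neg_one_pow_smul_map_cons_removeNth v
  simp only [smul_eq_mul, nsmul_eq_mul] at hsign
  simp only [dOp_cons, mul_add, Finset.sum_add_distrib, mul_left_comm _ (t ^ _), ← Finset.mul_sum]
  simp only [fval] at hsign ⊢
  rw [hsign]
  push_cast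
  ring

end PoincareOperator

theorem poincare_homotopy_identity_general
    (n m : ℕ)
    (Ω : Set (Fin n → ℝ)) (hΩ : IsOpen Ω)
    (x₀ : Fin n → ℝ)
    (hstar : ∀ x ∈ Ω, ∀ t ∈ Set.Icc (0 : ℝ) 1, x₀ + t • (x - x₀) ∈ Ω)
    (ω : DForm n (m + 1))
    (hsmooth : ∀ v : Fin (m + 1) → (Fin n → ℝ),
      ContDiffOn ℝ (⊤ : ℕ∞) (fun x => fval ω x v) Ω) :
    ∀ x ∈ Ω, ∀ v : Fin (m + 1) → (Fin n → ℝ),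
      dOp (pOp x₀ (fval ω)) x v + pOp x₀ (dOp (fval ω)) x v = fval ω x v := by
  intro x hx v
  have hω : ∀ v, ContDiffOn ℝ 1 (fun y => fval ω y v) Ω := fun v =>
    (hsmooth v).of_le (by exact_mod_cast le_top)
  rw [dOp_pOp_add_pOp_dOp_eq_integral hω hΩ (hstar x hx),
    ← integral_deriv_pow_succ_mul_comp_ray (hω v) hΩ (hstar x hx) m]
  exact intervalIntegral.integral_congr fun t _ =>
    dOp_pOp_integrand_add_pOp_dOp_integrand ω _ _ v t

/-- On an open star-shaped domain `Ω ⊆ ℝⁿ` with star center `x₀`,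
for every smooth `k`-form `ω` with `1 ≤ k ≤ n − 1` (here `k = m + 1`), the Poincaré
operator satisfies the homotopy identity `d(pω) + p(dω) = ω` on `Ω`. -/
theorem poincare_homotopy_identity
    (n m : ℕ) (hk : m + 1 ≤ n - 1)
    (Ω : Set (Fin n → ℝ)) (hΩ : IsOpen Ω)
    (x₀ : Fin n → ℝ) (hx₀ : x₀ ∈ Ω)
    (hstar : ∀ x ∈ Ω, ∀ t ∈ Set.Icc (0 : ℝ) 1, x₀ + t • (x - x₀) ∈ Ω)
    (ω : DForm n (m + 1))
    (hsmooth : ∀ v : Fin (m + 1) → (Fin n → ℝ),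
      ContDiffOn ℝ (⊤ : ℕ∞) (fun x => fval ω x v) Ω) :
    ∀ x ∈ Ω, ∀ v : Fin (m + 1) → (Fin n → ℝ),
      dOp (pOp x₀ (fval ω)) x v + pOp x₀ (dOp (fval ω)) x v = fval ω x v :=
  poincare_homotopy_identity_general n m Ω hΩ x₀ hstar ω hsmooth
end
end

section
/- For homogeneous polynomial k-forms of degree r on ℝⁿ with r + k > 0, the space decomposes as a direct sum H_r Λ^k = d(κ H_r Λ^k) ⊕ κ(d H_r Λ^k); equivalently H_r Λ^k = dH_{r+1}Λ^{k−1} ⊕ κH_{r−1}Λ^{k+1}. -/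
open scoped BigOperators

noncomputable section

/-- Koszul operator: contraction with the position (Euler) vector field. -/
def kOp {n k : ℕ} (ω : (Fin n → ℝ) → (Fin (k + 1) → (Fin n → ℝ)) → ℝ) :
    (Fin n → ℝ) → (Fin k → (Fin n → ℝ)) → ℝ :=
  fun x v => ω x (Fin.cons x v)

/-- `ω ∈ H_s Λ^k` with integer degree `s`: coefficients are homogeneous
polynomials of degree `s` (for `s < 0` this forces `ω = 0`). -/
def IsHomogZ {n k : ℕ} (s : ℤ) (ω : DForm n k) : Prop :=
  ∀ v : Fin k → (Fin n → ℝ), ∃ p : MvPolynomial (Fin n) ℝ,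
    (∀ x, fval ω x v = MvPolynomial.eval x p) ∧
    (p = 0 ∨ ∃ m : ℕ, (m : ℤ) = s ∧ p.IsHomogeneous m)

/-!
Give the forms polynomial coefficients. Then `d` is the alternation of the directional
derivatives and `κ = ∑ₐ Xₐ • ι_{eₐ}`, both algebraic operators on alternating maps with values
in `MvPolynomial`; `d ∘ d = 0` because directional derivatives commute, and `κ ∘ κ = 0` because
forms are alternating. For `ω` of polynomial degree `r` with `k + 1` slots, differentiating `κω`
gives `(k + 1) • ω` plus the alternation of `κ` applied to the derivatives of `ω`, while `κ dω` is
the Euler operator `r • ω` minus that same term, so `dκω + κdω = (r + k + 1) • ω`. Dividing by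
`r + k + 1` gives `ω = d (κω / (r + k + 1)) + κ (dω / (r + k + 1))`, and if `dα + κβ = dα' + κβ'`,
then `η = dα - dα'` satisfies `dη = 0 = κη`, hence `η = 0`.
-/

open MvPolynomial AlternatingMap

instance AlternatingMap.instIsZeroApply {R M N ι : Type*} [Semiring R] [AddCommMonoid M]
    [Module R M] [AddCommMonoid N] [Module R N] : IsZeroApply (M [⋀^ι]→ₗ[R] N) (ι → M) N :=
  ⟨fun _ => rfl⟩

instance AlternatingMap.instIsAddApply {R M N ι : Type*} [Semiring R] [AddCommMonoid M]
    [Module R M] [AddCommMonoid N] [Module R N] : IsAddApply (M [⋀^ι]→ₗ[R] N) (ι → M) N :=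
  ⟨fun _ _ _ => rfl⟩

instance Derivation.instIsZeroApply {R A M : Type*} [CommSemiring R] [CommSemiring A]
    [Algebra R A] [AddCommMonoid M] [Module A M] [Module R M] :
    IsZeroApply (Derivation R A M) A M :=
  ⟨fun _ => rfl⟩

instance Derivation.instIsAddApply {R A M : Type*} [CommSemiring R] [CommSemiring A]
    [Algebra R A] [AddCommMonoid M] [Module A M] [Module R M] :
    IsAddApply (Derivation R A M) A M :=
  ⟨fun _ _ _ => rfl⟩

namespace AlternatingMap

variable {R M N : Type*} [CommRing R] [AddCommGroup M] [Module R M] [AddCommGroup N]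
  [Module R N] {k : ℕ}

lemma curryLeft_alternatizeUncurryFin_add (G : M →ₗ[R] M [⋀^Fin (k + 1)]→ₗ[R] N) (u : M) :
    (alternatizeUncurryFin G).curryLeft u +
      alternatizeUncurryFin (curryLeftLinearMap.flip u ∘ₗ G) = G u := by
  ext v
  have hcons (i : Fin (k + 1)) :
      i.succ.removeNth (Matrix.vecCons u v) = Matrix.vecCons u (i.removeNth v) :=
    Fin.cons_comp_succ_succAbove u v i
  simp only [add_apply, curryLeft_apply_apply, alternatizeUncurryFin_apply, LinearMap.comp_apply,
    LinearMap.flip_apply, curryLeftLinearMap_apply]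
  rw [Fin.sum_univ_succ]
  simp [hcons, pow_succ]

lemma curryLeft_alternatizeUncurryFin_fin_zero (G : M →ₗ[R] M [⋀^Fin 0]→ₗ[R] N) (u : M) :
    (alternatizeUncurryFin G).curryLeft u = G u := by
  ext v
  simp [alternatizeUncurryFin_apply, Subsingleton.elim v Fin.elim0]

lemma sum_smul_curryLeft_single {σ : Type*} [Fintype σ] [DecidableEq σ]
    (Ω : (σ → R) [⋀^Fin (k + 1)]→ₗ[R] N) (u : σ → R) :
    ∑ a, u a • Ω.curryLeft (Pi.single a 1) = Ω.curryLeft u := by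
  rw [LinearMap.pi_apply_eq_sum_univ Ω.curryLeft u]
  congr! with a
  simp [Pi.single_apply, eq_comm]

end AlternatingMap

abbrev PolyForm (σ R : Type*) [CommRing R] (k : ℕ) :=
  (σ → R) [⋀^Fin k]→ₗ[R] MvPolynomial σ R

namespace PolyForm

variable {σ R : Type*} [CommRing R] {k r : ℕ}

def dirDeriv (u : σ → R) : Derivation R (MvPolynomial σ R) (MvPolynomial σ R) :=
  mkDerivation R fun a => C (u a)

@[simp] lemma dirDeriv_X (u : σ → R) (a : σ) : dirDeriv u (X a : MvPolynomial σ R) = C (u a) :=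
  mkDerivation_X _ _ _

lemma dirDeriv_add (u u' : σ → R) : dirDeriv (u + u') = dirDeriv u + dirDeriv u' :=
  derivation_ext fun a => by simp

lemma dirDeriv_smul (c : R) (u : σ → R) : dirDeriv (c • u) = c • dirDeriv u :=
  derivation_ext fun a => by simp [smul_eq_C_mul]

lemma dirDeriv_single [DecidableEq σ] (a : σ) : dirDeriv (Pi.single a 1 : σ → R) = pderiv a :=
  derivation_ext fun b => by simp [pderiv_X, Pi.single_apply, apply_ite C]

lemma dirDeriv_comm (u u' : σ → R) (p : MvPolynomial σ R) :
    dirDeriv u (dirDeriv u' p) = dirDeriv u' (dirDeriv u p) := by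
  have : ⁅dirDeriv u, dirDeriv u'⁆ = 0 :=
    derivation_ext fun a => by simp [Derivation.commutator_apply, derivation_C]
  simpa [Derivation.commutator_apply, sub_eq_zero] using congr($this p)

lemma dirDeriv_eq_zero_of_isHomogeneous_zero {p : MvPolynomial σ R} (hp : p.IsHomogeneous 0)
    (u : σ → R) : dirDeriv u p = 0 := by
  rw [← totalDegree_zero_iff_isHomogeneous, totalDegree_eq_zero_iff_eq_C] at hp
  rw [hp, derivation_C]

def dirDerivForm (Ω : PolyForm σ R k) : (σ → R) →ₗ[R] PolyForm σ R k where
  toFun u := (dirDeriv u : MvPolynomial σ R →ₗ[R] _).compAlternatingMap Ω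
  map_add' u u' := by ext; simp [dirDeriv_add]
  map_smul' c u := by ext; simp [dirDeriv_smul]

@[simp] lemma dirDerivForm_apply (Ω : PolyForm σ R k) (u : σ → R) (v : Fin k → σ → R) :
    dirDerivForm Ω u v = dirDeriv u (Ω v) := rfl

@[simp] lemma dirDerivForm_add (Ω Ω' : PolyForm σ R k) :
    dirDerivForm (Ω + Ω') = dirDerivForm Ω + dirDerivForm Ω' := by
  ext u v : 2; simp

@[simp] lemma dirDerivForm_smul (c : R) (Ω : PolyForm σ R k) :
    dirDerivForm (c • Ω) = c • dirDerivForm Ω := by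
  ext u v : 2; simp

def extDeriv (Ω : PolyForm σ R k) : PolyForm σ R (k + 1) :=
  alternatizeUncurryFin (dirDerivForm Ω)

lemma extDeriv_apply (Ω : PolyForm σ R k) (v : Fin (k + 1) → σ → R) :
    extDeriv Ω v = ∑ i : Fin (k + 1), (-1 : ℤ) ^ (i : ℕ) • dirDeriv (v i) (Ω (i.removeNth v)) := by
  rw [extDeriv, alternatizeUncurryFin_apply]
  rfl

lemma extDeriv_sub (Ω Ω' : PolyForm σ R k) : extDeriv (Ω - Ω') = extDeriv Ω - extDeriv Ω' := by
  ext v : 1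
  simp [extDeriv_apply, smul_sub, Finset.sum_sub_distrib]

@[simp] lemma extDeriv_zero : extDeriv (0 : PolyForm σ R k) = 0 := by
  simpa using extDeriv_sub (0 : PolyForm σ R k) 0

lemma extDeriv_smul (c : R) (Ω : PolyForm σ R k) : extDeriv (c • Ω) = c • extDeriv Ω := by
  ext v : 1
  simp [extDeriv_apply, Finset.smul_sum]

theorem extDeriv_extDeriv (Ω : PolyForm σ R k) : extDeriv (extDeriv Ω) = 0 := by
  let f : (σ → R) →ₗ[R] (σ → R) →ₗ[R] PolyForm σ R k :=
    LinearMap.mk₂ R (fun u u' => dirDerivForm (dirDerivForm Ω u') u)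
      (by simp) (by simp) (by simp) (by simp)
  have hf : dirDerivForm (extDeriv Ω) = alternatizeUncurryFinLM ∘ₗ f := by
    ext u v : 2
    simp [f, extDeriv, alternatizeUncurryFin_apply]
  rw [extDeriv, hf]
  refine alternatizeUncurryFin_alternatizeUncurryFinLM_comp_of_symmetric fun u u' => ?_
  ext v : 1
  simp [f, dirDeriv_comm u]

def IsHomogeneous (r : ℕ) (Ω : PolyForm σ R k) : Prop :=
  ∀ v, (Ω v).IsHomogeneous r

lemma IsHomogeneous.smul {Ω : PolyForm σ R k} (hΩ : IsHomogeneous r Ω) (c : R) :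
    IsHomogeneous r (c • Ω) := fun v => by simpa [smul_eq_C_mul] using (hΩ v).C_mul c

lemma IsHomogeneous.sub {Ω Ω' : PolyForm σ R k} (hΩ : IsHomogeneous r Ω)
    (hΩ' : IsHomogeneous r Ω') : IsHomogeneous r (Ω - Ω') := fun v => (hΩ v).sub (hΩ' v)

lemma extDeriv_eq_zero_of_isHomogeneous_zero {Ω : PolyForm σ R k} (hΩ : IsHomogeneous 0 Ω) :
    extDeriv Ω = 0 := by
  ext v : 1
  simp [extDeriv_apply, dirDeriv_eq_zero_of_isHomogeneous_zero (hΩ _)]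

variable [Fintype σ]

lemma dirDeriv_eq_sum (u : σ → R) : dirDeriv u = ∑ a, u a • pderiv a := by
  classical
  exact derivation_ext fun b => by simp [pderiv_X, Pi.single_apply, smul_eq_C_mul]

lemma _root_.MvPolynomial.IsHomogeneous.dirDeriv {p : MvPolynomial σ R} (hp : p.IsHomogeneous r)
    (u : σ → R) : (dirDeriv u p).IsHomogeneous (r - 1) := by
  rw [dirDeriv_eq_sum, sum_apply]
  exact IsHomogeneous.sum _ _ _ fun a _ => by simpa [smul_eq_C_mul] using hp.pderiv.C_mul (u a)

lemma IsHomogeneous.extDeriv {Ω : PolyForm σ R k} (hΩ : IsHomogeneous r Ω) :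
    IsHomogeneous (r - 1) (extDeriv Ω) := fun v => by
  rw [extDeriv_apply]
  exact IsHomogeneous.sum _ _ _ fun i _ => by
    simpa [zsmul_eq_mul] using ((hΩ _).dirDeriv (v i)).C_mul ((-1 : R) ^ (i : ℕ))

variable [DecidableEq σ]

def koszul (Ω : PolyForm σ R (k + 1)) : PolyForm σ R k :=
  ∑ a, (X a : MvPolynomial σ R) • Ω.curryLeft (Pi.single a 1)

lemma koszul_apply (Ω : PolyForm σ R (k + 1)) (v : Fin k → σ → R) :
    koszul Ω v = ∑ a, X a * Ω (Matrix.vecCons (Pi.single a 1) v) := by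
  simp [koszul]

lemma koszul_sub (Ω Ω' : PolyForm σ R (k + 1)) : koszul (Ω - Ω') = koszul Ω - koszul Ω' := by
  ext v : 1
  simp [koszul_apply, mul_sub, Finset.sum_sub_distrib]

@[simp] lemma koszul_zero : koszul (0 : PolyForm σ R (k + 1)) = 0 := by
  simpa using koszul_sub (0 : PolyForm σ R (k + 1)) 0

lemma koszul_smul (c : R) (Ω : PolyForm σ R (k + 1)) : koszul (c • Ω) = c • koszul Ω := by
  ext v : 1
  simp [koszul_apply, Finset.smul_sum]

def koszulLinearMap : PolyForm σ R (k + 1) →ₗ[R] PolyForm σ R k where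
  toFun := koszul
  map_add' Ω Ω' := by ext v : 1; simp [koszul_apply, mul_add, Finset.sum_add_distrib]
  map_smul' := koszul_smul

lemma eval_koszul (Ω : PolyForm σ R (k + 1)) (x : σ → R) (v : Fin k → σ → R) :
    eval x (koszul Ω v) = eval x (Ω (Matrix.vecCons x v)) := by
  have hx : Ω (Matrix.vecCons x v) = ∑ a, x a • Ω (Matrix.vecCons (Pi.single a 1) v) := by
    simpa using congr($((sum_smul_curryLeft_single Ω x).symm) v)
  simp [koszul_apply, hx, smul_eval]

theorem koszul_koszul [IsDomain R] [Infinite R] (Ω : PolyForm σ R (k + 2)) :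
    koszul (koszul Ω) = 0 := by
  ext v : 1
  refine MvPolynomial.funext fun x => ?_
  rw [eval_koszul, eval_koszul]
  exact congr(eval x $(congr($(curryLeft_same Ω x) v)))

lemma IsHomogeneous.koszul {Ω : PolyForm σ R (k + 1)} (hΩ : IsHomogeneous r Ω) :
    IsHomogeneous (r + 1) (koszul Ω) := fun v => by
  rw [koszul_apply, add_comm r 1]
  exact IsHomogeneous.sum _ _ _ fun a _ => (isHomogeneous_X R a).mul (hΩ _)

lemma dirDerivForm_koszul (Ω : PolyForm σ R (k + 1)) :
    dirDerivForm (koszul Ω) = koszulLinearMap ∘ₗ dirDerivForm Ω + Ω.curryLeft := by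
  refine LinearMap.ext fun u => ?_
  ext v : 1
  have hu : Ω (Matrix.vecCons u v) = ∑ a, u a • Ω (Matrix.vecCons (Pi.single a 1) v) := by
    simpa using congr($((sum_smul_curryLeft_single Ω u).symm) v)
  simp [koszulLinearMap, koszul_apply, hu, Derivation.leibniz, smul_eq_C_mul,
    Finset.sum_add_distrib, add_comm, mul_comm]

lemma koszul_alternatizeUncurryFin_add (G : (σ → R) →ₗ[R] PolyForm σ R (k + 1)) :
    koszul (alternatizeUncurryFin G) + alternatizeUncurryFin (koszulLinearMap ∘ₗ G) =
      ∑ a, (X a : MvPolynomial σ R) • G (Pi.single a 1) := by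
  have hG : koszulLinearMap ∘ₗ G =
      ∑ a, (X a : MvPolynomial σ R) • (curryLeftLinearMap.flip (Pi.single a 1) ∘ₗ G) := by
    refine LinearMap.ext fun u => ?_
    ext v : 1
    simp [koszulLinearMap, koszul_apply]
  have hsum := map_sum (alternatizeUncurryFinLM (R := R) (M := σ → R) (N := MvPolynomial σ R))
    (fun a => (X a : MvPolynomial σ R) • (curryLeftLinearMap.flip (Pi.single a 1) ∘ₗ G))
    Finset.univ
  simp only [alternatizeUncurryFinLM_apply] at hsum
  rw [hG, hsum]
  simp only [alternatizeUncurryFin_smul, koszul, ← Finset.sum_add_distrib, ← smul_add,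
    curryLeft_alternatizeUncurryFin_add]

lemma koszul_alternatizeUncurryFin_zeroForm (G : (σ → R) →ₗ[R] PolyForm σ R 0) :
    koszul (alternatizeUncurryFin G) = ∑ a, (X a : MvPolynomial σ R) • G (Pi.single a 1) := by
  simp [koszul, curryLeft_alternatizeUncurryFin_fin_zero]

lemma sum_X_smul_dirDerivForm_single {Ω : PolyForm σ R k} (hΩ : IsHomogeneous r Ω) :
    ∑ a, (X a : MvPolynomial σ R) • dirDerivForm Ω (Pi.single a 1) = r • Ω := by
  ext v : 1
  simp [dirDeriv_single, (hΩ v).sum_X_mul_pderiv]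

theorem extDeriv_koszul_add_koszul_extDeriv {Ω : PolyForm σ R (k + 1)} (hΩ : IsHomogeneous r Ω) :
    extDeriv (koszul Ω) + koszul (extDeriv Ω) = (r + k + 1) • Ω := by
  have h := koszul_alternatizeUncurryFin_add (dirDerivForm Ω)
  rw [sum_X_smul_dirDerivForm_single hΩ] at h
  rw [extDeriv, dirDerivForm_koszul, alternatizeUncurryFin_add, alternatizeUncurryFin_curryLeft,
    extDeriv, show (r + k + 1) • Ω = r • Ω + (k + 1) • Ω by rw [add_assoc, add_smul], ← h]
  abel

theorem koszul_extDeriv_zeroForm {Ω : PolyForm σ R 0} (hΩ : IsHomogeneous r Ω) :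
    koszul (extDeriv Ω) = r • Ω := by
  rw [extDeriv, koszul_alternatizeUncurryFin_zeroForm, sum_X_smul_dirDerivForm_single hΩ]

end PolyForm

namespace PolyForm

variable {σ K : Type*} [Fintype σ] [DecidableEq σ] [Field K] [CharZero K] {k r : ℕ}

theorem eq_extDeriv_add_koszul {Ω : PolyForm σ K (k + 1)} (hΩ : IsHomogeneous r Ω) :
    Ω = extDeriv ((r + k + 1 : K)⁻¹ • koszul Ω) + koszul ((r + k + 1 : K)⁻¹ • extDeriv Ω) := by
  rw [extDeriv_smul, koszul_smul, ← smul_add, extDeriv_koszul_add_koszul_extDeriv hΩ,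
    ← Nat.cast_smul_eq_nsmul K, smul_smul]
  push_cast
  rw [inv_mul_cancel₀ (by exact_mod_cast (r + k).succ_ne_zero), one_smul]

theorem eq_koszul_extDeriv_zeroForm {Ω : PolyForm σ K 0} (hΩ : IsHomogeneous (r + 1) Ω) :
    Ω = koszul ((r + 1 : K)⁻¹ • extDeriv Ω) := by
  rw [koszul_smul, koszul_extDeriv_zeroForm hΩ, ← Nat.cast_smul_eq_nsmul K, smul_smul]
  push_cast
  rw [inv_mul_cancel₀ (by exact_mod_cast r.succ_ne_zero), one_smul]

theorem eq_zero_of_extDeriv_eq_zero_of_koszul_eq_zero {η : PolyForm σ K (k + 1)}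
    (hη : IsHomogeneous r η) (hd : extDeriv η = 0) (hκ : koszul η = 0) : η = 0 := by
  have h := extDeriv_koszul_add_koszul_extDeriv hη
  rw [hd, hκ, extDeriv_zero, koszul_zero, add_zero, eq_comm, smul_eq_zero] at h
  exact h.resolve_left (r + k).succ_ne_zero

theorem extDeriv_eq_of_extDeriv_add_koszul_eq {A A' : PolyForm σ K k}
    {B B' : PolyForm σ K (k + 2)} (hA : IsHomogeneous (r + 1) A) (hA' : IsHomogeneous (r + 1) A')
    (h : extDeriv A + koszul B = extDeriv A' + koszul B') : extDeriv A = extDeriv A' := by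
  have hη : extDeriv A - extDeriv A' = koszul B' - koszul B := by
    rw [sub_eq_sub_iff_add_eq_add, h]
    exact add_comm _ _
  refine sub_eq_zero.mp (eq_zero_of_extDeriv_eq_zero_of_koszul_eq_zero (r := r) ?_ ?_ ?_)
  · simpa using hA.extDeriv.sub hA'.extDeriv
  · rw [extDeriv_sub, extDeriv_extDeriv, extDeriv_extDeriv, sub_zero]
  · rw [hη, koszul_sub, koszul_koszul, koszul_koszul, sub_zero]

end PolyForm

namespace MvPolynomial

open PolyForm

variable {𝕜 σ : Type*} [NontriviallyNormedField 𝕜] [Fintype σ]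

lemma exists_hasFDerivAt_eval (p : MvPolynomial σ 𝕜) (x : σ → 𝕜) :
    ∃ L : (σ → 𝕜) →L[𝕜] 𝕜, HasFDerivAt (fun y => eval y p) L x ∧
      ∀ u, L u = eval x (dirDeriv u p) := by
  induction p using MvPolynomial.induction_on with
  | C c => exact ⟨0, by simpa using hasFDerivAt_const c x, by simp [derivation_C]⟩
  | add p q hp hq =>
    obtain ⟨L, hL, hLu⟩ := hp
    obtain ⟨L', hL', hL'u⟩ := hq
    exact ⟨L + L', by simp only [map_add]; exact hL.add hL', by simp [hLu, hL'u]⟩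
  | mul_X p a hp =>
    obtain ⟨L, hL, hLu⟩ := hp
    refine ⟨eval x p • ContinuousLinearMap.proj a + x a • L, ?_, fun u => ?_⟩
    · simp only [eval_mul, eval_X]
      exact hL.mul (hasFDerivAt_apply a x)
    · simp [hLu, Derivation.leibniz]

lemma fderiv_eval_apply (p : MvPolynomial σ 𝕜) (x u : σ → 𝕜) :
    fderiv 𝕜 (fun y => eval y p) x u = eval x (dirDeriv u p) := by
  obtain ⟨L, hL, hLu⟩ := p.exists_hasFDerivAt_eval x
  rw [hL.fderiv, hLu]

end MvPolynomial

namespace PolyForm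

variable {n k r : ℕ}

def toDForm (Ω : PolyForm (Fin n) ℝ k) : DForm n k :=
  fun x => (aeval x).toLinearMap.compAlternatingMap Ω

@[simp] lemma fval_toDForm (Ω : PolyForm (Fin n) ℝ k) (x : Fin n → ℝ) (v : Fin k → Fin n → ℝ) :
    fval (toDForm Ω) x v = eval x (Ω v) := by
  simp [fval, toDForm]

lemma eq_of_fval_toDForm_eq {Ω Ω' : PolyForm (Fin n) ℝ k}
    (h : ∀ x v, fval (toDForm Ω) x v = fval (toDForm Ω') x v) : Ω = Ω' := by
  ext v : 1
  exact MvPolynomial.funext fun x => by simpa using h x v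

-- The value polynomials of `ω` are unique (`ℝ` is infinite), so they inherit multilinearity
-- and alternation from `ω`.
lemma _root_.IsHomogZ.exists_eq_toDForm {s : ℤ} {ω : DForm n k} (h : IsHomogZ s ω) :
    ∃ Ω : PolyForm (Fin n) ℝ k, ω = toDForm Ω := by
  choose P hP using h
  have hPω (x : Fin n → ℝ) (v : Fin k → Fin n → ℝ) : ω x v = eval x (P v) := (hP v).1 x
  let Ω : PolyForm (Fin n) ℝ k :=
    { toFun := P
      map_update_add' := fun v i a b => MvPolynomial.funext fun x => by simp [← hPω]
      map_update_smul' := fun v i c a => MvPolynomial.funext fun x => by simp [← hPω, smul_eval]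
      map_eq_zero_of_eq' := fun v i j hv hij => MvPolynomial.funext fun x => by
        simp [← hPω, (ω x).map_eq_zero_of_eq v hv hij] }
  refine ⟨Ω, funext fun x => ?_⟩
  ext v
  simp [Ω, hPω, toDForm]

lemma isHomogZ_toDForm_iff {s : ℤ} {Ω : PolyForm (Fin n) ℝ k} :
    IsHomogZ s (toDForm Ω) ↔
      ∀ v, Ω v = 0 ∨ ∃ m : ℕ, (m : ℤ) = s ∧ (Ω v).IsHomogeneous m := by
  refine forall_congr' fun v => ⟨fun ⟨p, hp, hdeg⟩ => ?_, fun h => ⟨Ω v, (fval_toDForm Ω · v), h⟩⟩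
  have hΩp : Ω v = p := MvPolynomial.funext fun x => by simpa using hp x
  rwa [hΩp]

lemma isHomogZ_natCast_toDForm_iff {Ω : PolyForm (Fin n) ℝ k} :
    IsHomogZ (r : ℤ) (toDForm Ω) ↔ IsHomogeneous r Ω := by
  rw [isHomogZ_toDForm_iff]
  refine forall_congr' fun v => ⟨?_, fun h => Or.inr ⟨r, rfl, h⟩⟩
  rintro (h | ⟨m, hm, h⟩)
  · simp [h, isHomogeneous_zero]
  · rwa [Nat.cast_inj.mp hm] at h

-- For `r = 0` the degree `r - 1 = -1` only admits the zero form, which is what `dΩ` is.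
lemma isHomogZ_toDForm_smul_extDeriv {Ω : PolyForm (Fin n) ℝ k} (hΩ : IsHomogeneous r Ω)
    (c : ℝ) : IsHomogZ ((r : ℤ) - 1) (toDForm (c • extDeriv Ω)) := by
  rcases r with _ | r
  · rw [extDeriv_eq_zero_of_isHomogeneous_zero hΩ, smul_zero]
    exact isHomogZ_toDForm_iff.mpr fun v => Or.inl rfl
  · simpa using isHomogZ_natCast_toDForm_iff.mpr (hΩ.extDeriv.smul c)

lemma dOp_fval_toDForm (Ω : PolyForm (Fin n) ℝ k) :
    dOp (fval (toDForm Ω)) = fval (toDForm (extDeriv Ω)) := by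
  funext x v
  simp [dOp, extDeriv_apply, fderiv_eval_apply]
  rfl

lemma kOp_fval_toDForm (Ω : PolyForm (Fin n) ℝ (k + 1)) :
    kOp (fval (toDForm Ω)) = fval (toDForm (koszul Ω)) := by
  funext x v
  simp [kOp, eval_koszul]
  rfl

end PolyForm

open PolyForm in
/-- For `r + k > 0`, `H_r Λ^k = d H_{r+1} Λ^{k−1} ⊕ κ H_{r−1} Λ^{k+1}`:
every homogeneous polynomial `k`-form of degree `r` decomposes as `dα + κβ`, and the
two summands are uniquely determined.  The case `k ≥ 1` is stated with `k = m + 1`;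
for `k = 0` (with `r > 0`) the `d`-summand is absent and `H_r Λ⁰ = κ H_{r−1} Λ¹`. -/
theorem homogeneous_koszul_decomposition (n r : ℕ) :
    (∀ (m : ℕ) (ω : DForm n (m + 1)), IsHomogZ (r : ℤ) ω →
      (∃ (α : DForm n m) (β : DForm n (m + 2)),
        IsHomogZ ((r : ℤ) + 1) α ∧ IsHomogZ ((r : ℤ) - 1) β ∧
        ∀ (x : Fin n → ℝ) (v : Fin (m + 1) → (Fin n → ℝ)),
          fval ω x v = dOp (fval α) x v + kOp (fval β) x v) ∧
      (∀ (α α' : DForm n m) (β β' : DForm n (m + 2)),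
        IsHomogZ ((r : ℤ) + 1) α → IsHomogZ ((r : ℤ) + 1) α' →
        IsHomogZ ((r : ℤ) - 1) β → IsHomogZ ((r : ℤ) - 1) β' →
        (∀ (x : Fin n → ℝ) (v : Fin (m + 1) → (Fin n → ℝ)),
          dOp (fval α) x v + kOp (fval β) x v
            = dOp (fval α') x v + kOp (fval β') x v) →
        (∀ (x : Fin n → ℝ) (v : Fin (m + 1) → (Fin n → ℝ)),
          dOp (fval α) x v = dOp (fval α') x v ∧
          kOp (fval β) x v = kOp (fval β') x v))) ∧
    (0 < r → ∀ ω : DForm n 0, IsHomogZ (r : ℤ) ω →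
      ∃ β : DForm n 1, IsHomogZ ((r : ℤ) - 1) β ∧
        ∀ (x : Fin n → ℝ) (v : Fin 0 → (Fin n → ℝ)),
          fval ω x v = kOp (fval β) x v) := by
  refine ⟨fun m ω hω => ⟨?_, fun α α' β β' hα hα' hβ hβ' hsum => ?_⟩, fun hr ω hω => ?_⟩
  · obtain ⟨Ω, rfl⟩ := hω.exists_eq_toDForm
    have hΩ := isHomogZ_natCast_toDForm_iff.mp hω
    refine ⟨toDForm ((r + m + 1 : ℝ)⁻¹ • koszul Ω), toDForm ((r + m + 1 : ℝ)⁻¹ • extDeriv Ω),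
      by exact_mod_cast isHomogZ_natCast_toDForm_iff.mpr (hΩ.koszul.smul _),
      isHomogZ_toDForm_smul_extDeriv hΩ _, fun x v => ?_⟩
    rw [dOp_fval_toDForm, kOp_fval_toDForm, fval_toDForm, fval_toDForm, fval_toDForm, ← map_add,
      ← AlternatingMap.add_apply, ← eq_extDeriv_add_koszul hΩ]
  · obtain ⟨A, rfl⟩ := hα.exists_eq_toDForm
    obtain ⟨A', rfl⟩ := hα'.exists_eq_toDForm
    obtain ⟨B, rfl⟩ := hβ.exists_eq_toDForm
    obtain ⟨B', rfl⟩ := hβ'.exists_eq_toDForm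
    have h : extDeriv A + koszul B = extDeriv A' + koszul B' := eq_of_fval_toDForm_eq fun x v => by
      simpa [dOp_fval_toDForm, kOp_fval_toDForm] using hsum x v
    have hdA := extDeriv_eq_of_extDeriv_add_koszul_eq
      (isHomogZ_natCast_toDForm_iff.mp (by exact_mod_cast hα))
      (isHomogZ_natCast_toDForm_iff.mp (by exact_mod_cast hα')) h
    have hκB : koszul B = koszul B' := add_left_cancel (hdA ▸ h)
    simp [dOp_fval_toDForm, kOp_fval_toDForm, hdA, hκB]
  · obtain ⟨s, rfl⟩ : ∃ s, r = s + 1 := ⟨r - 1, by omega⟩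
    obtain ⟨Ω, rfl⟩ := hω.exists_eq_toDForm
    have hΩ := isHomogZ_natCast_toDForm_iff.mp hω
    refine ⟨toDForm ((s + 1 : ℝ)⁻¹ • extDeriv Ω), isHomogZ_toDForm_smul_extDeriv hΩ _,
      fun x v => ?_⟩
    rw [kOp_fval_toDForm, ← eq_koszul_extDeriv_zeroForm hΩ]
end
end
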